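/- The operator Y shifts the parameter α of U_n by one: for every integer n with 0 ≤ n ≤ N and every integer x, A₁(x) U_n(x+1;α,β,N) + A₂(x) U_n(x−1;α,β,N) + A₀(x) U_n(x;α,β,N) = α n (n + β − N) · U_n(x;α+1,β,N). -/

import Mathlib

/-- Pochhammer symbol `(a)_k = a (a+1) ⋯ (a+k-1)`, with `(a)_0 = 1`. -/
noncomputable def poch (a : ℝ) (k : ℕ) : ℝ := ∏ i ∈ Finset.range k, (a + (i : ℝ))

/-- Coefficients of the difference operator `Y`. -/
noncomputable def A1 (α β : ℝ) (N : ℕ) (x : ℝ) : ℝ := (x - α) * (x - (N : ℝ)) * (x + 1 - α)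
noncomputable def A2 (α β : ℝ) (N : ℕ) (x : ℝ) : ℝ := x * (x - α) * (x + β - α - (N : ℝ))
noncomputable def A0 (α β : ℝ) (N : ℕ) (x : ℝ) : ℝ :=
  (x - α) * (-2 * x ^ 2 + (2 * α - 1 + 2 * (N : ℝ) - β) * x - (N : ℝ) * (α - 1))

/-- The rational function of Hahn type `U_n(x;α,β,N)`. -/
noncomputable def U (α β : ℝ) (N n : ℕ) (x : ℤ) : ℝ :=
  ((-1 : ℝ) ^ n * poch (-(N : ℝ)) n / poch (β + 1) n) *
    ∑ k ∈ Finset.range (n + 1),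
      poch (-(x : ℝ)) k * poch (-(n : ℝ)) k * poch (β + (n : ℝ) - (N : ℝ)) k /
        ((Nat.factorial k : ℝ) * poch (-(N : ℝ)) k * poch (α - (x : ℝ)) k)
/-! Up to a constant factor, `U_n(x; α)` is `∑ₖ cₖ rₖ(α, x)` with `rₖ(α, x) = (-x)ₖ / (α - x)ₖ`
and `cₖ = (-n)ₖ (β + n - N)ₖ / (k! (-N)ₖ)`. Clearing denominators gives the contiguity relation
`Y rₖ(α, ·) = α k (k + β - N) rₖ(α + 1, ·) + α k (N + 1 - k) rₖ₋₁(α + 1, ·)`, and the ratio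
`cₖ₊₁ / cₖ` turns `cₖ₊₁ (k + 1) (N - k)` into `cₖ (n - k) (β + n - N + k)`. After this reindexing
the coefficient of `cₖ rₖ(α + 1, x)` is `α (k (k + β - N) + (n - k) (β + n - N + k)) = α n (n + β - N)`.
-/

open Finset

lemma poch_zero (a : ℝ) : poch a 0 = 1 := prod_range_zero _

lemma poch_succ (a : ℝ) (k : ℕ) : poch a (k + 1) = poch a k * (a + k) := prod_range_succ _ _

lemma poch_succ' (a : ℝ) (k : ℕ) : poch a (k + 1) = a * poch (a + 1) k := by
  simp only [poch, prod_range_succ', Nat.cast_add, Nat.cast_one, Nat.cast_zero, add_zero, mul_comm a]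
  exact congrArg (· * a) (prod_congr rfl fun i _ => by ring)

lemma poch_neg_natCast_ne_zero {N k : ℕ} (h : k ≤ N) : poch (-(N : ℝ)) k ≠ 0 :=
  prod_ne_zero_iff.2 fun i hi => by
    have : (i : ℝ) < N := by exact_mod_cast (mem_range.1 hi).trans_le h
    linarith

noncomputable def hahnOp (α β : ℝ) (N : ℕ) (f : ℝ → ℝ) (x : ℝ) : ℝ :=
  A1 α β N x * f (x + 1) + A2 α β N x * f (x - 1) + A0 α β N x * f x

lemma hahnOp_sum {ι : Type*} (α β : ℝ) (N : ℕ) (s : Finset ι) (c : ι → ℝ) (f : ι → ℝ → ℝ)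
    (x : ℝ) :
    hahnOp α β N (fun y => ∑ i ∈ s, c i * f i y) x = ∑ i ∈ s, c i * hahnOp α β N (f i) x := by
  simp only [hahnOp, mul_sum, ← sum_add_distrib]
  exact sum_congr rfl fun _ _ => by ring

lemma A1_add_A2_add_A0 (α β : ℝ) (N : ℕ) (x : ℝ) : A1 α β N x + A2 α β N x + A0 α β N x = 0 := by
  unfold A1 A2 A0; ring

noncomputable def hahnRatio (α x : ℝ) (k : ℕ) : ℝ := poch (-x) k / poch (α - x) k

section hahnRatio

variable (α x : ℝ) (k : ℕ)

lemma hahnRatio_zero : hahnRatio α x 0 = 1 := by simp [hahnRatio, poch_zero]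

lemma hahnRatio_succ : hahnRatio α x (k + 1) = hahnRatio α x k * ((k - x) / (α - x + k)) := by
  rw [hahnRatio, hahnRatio, poch_succ, poch_succ, mul_div_mul_comm, neg_add_eq_sub]

lemma hahnRatio_add_one_succ :
    hahnRatio α (x + 1) (k + 1) = (x + 1) / (x + 1 - α) * hahnRatio α x k := by
  rw [hahnRatio, hahnRatio, poch_succ', poch_succ', mul_div_mul_comm,
    show -(x + 1) + 1 = -x by ring, show α - (x + 1) + 1 = α - x by ring, ← neg_sub (x + 1) α,
    neg_div_neg_eq]

lemma hahnRatio_add_one_left (h : α - x ≠ 0) :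
    hahnRatio (α + 1) x k = hahnRatio α x k * ((α - x) / (α - x + k)) := by
  have hpoch : poch (α + 1 - x) k = poch (α - x) k * (α - x + k) / (α - x) := by
    rw [eq_div_iff h, ← poch_succ, poch_succ', sub_add_eq_add_sub, mul_comm]
  rw [hahnRatio, hahnRatio, hpoch, div_div_eq_mul_div, mul_div_mul_comm]

end hahnRatio

lemma hahnOp_hahnRatio_zero (α β : ℝ) (N : ℕ) (x : ℝ) :
    hahnOp α β N (hahnRatio α · 0) x = 0 := by
  simp only [hahnOp, hahnRatio_zero, mul_one, A1_add_A2_add_A0]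

lemma hahnOp_hahnRatio_succ (α β : ℝ) (N : ℕ) (x : ℝ) (hαx : ∀ m : ℤ, α - x ≠ m) (k : ℕ) :
    hahnOp α β N (hahnRatio α · (k + 1)) x =
      α * (k + 1) * (k + 1 + β - N) * hahnRatio (α + 1) x (k + 1)
        + α * (k + 1) * (N - k) * hahnRatio (α + 1) x k := by
  have h0 : α - x ≠ 0 := by simpa using hαx 0
  have hxα : x - α ≠ 0 := fun h => h0 (by linarith)
  have h1 : x + 1 - α ≠ 0 := fun h => hαx 1 (by push_cast; linarith)
  have hk : α - x + k ≠ 0 := fun h => hαx (-k) (by push_cast; linarith)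
  have hk1 : α - x + (k + 1) ≠ 0 := fun h => hαx (-(k + 1)) (by push_cast; linarith)
  -- the factor `x` of `A2` lets the shift to `x - 1` be undone without dividing by `x`
  have hdown : x * hahnRatio α (x - 1) (k + 1) = (x - α) * hahnRatio α x (k + 2) := by
    have := hahnRatio_add_one_succ α (x - 1) (k + 1)
    rw [sub_add_cancel] at this
    rw [this, ← mul_assoc, mul_div_cancel₀ _ hxα]
  have hA2 : A2 α β N x = (x - α) * (x + β - α - N) * x := by unfold A2; ring
  simp only [hahnOp, hA2, mul_assoc _ x, hdown, hahnRatio_add_one_succ,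
    hahnRatio_add_one_left α x _ h0, hahnRatio_succ α x (k + 1), hahnRatio_succ α x k]
  unfold A0 A1
  push_cast
  field_simp
  ring

noncomputable def hahnCoeff (β : ℝ) (N n k : ℕ) : ℝ :=
  poch (-(n : ℝ)) k * poch (β + n - N) k / (k.factorial * poch (-(N : ℝ)) k)

lemma hahnCoeff_succ_mul (β : ℝ) {N : ℕ} (n : ℕ) {j : ℕ} (hj : j < N) :
    hahnCoeff β N n (j + 1) * ((j + 1) * (N - j)) =
      hahnCoeff β N n j * ((n - j) * (β + n - N + j)) := by
  have hpoch := poch_neg_natCast_ne_zero hj.le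
  have hNj : -(N : ℝ) + j ≠ 0 := by
    have : (j : ℝ) < N := by exact_mod_cast hj
    linarith
  unfold hahnCoeff
  rw [poch_succ, poch_succ, poch_succ, Nat.factorial_succ]
  push_cast
  field_simp
  ring

theorem hahnOp_sum_hahnCoeff_mul_hahnRatio (α β : ℝ) {N n : ℕ} (hn : n ≤ N) (x : ℝ)
    (hαx : ∀ m : ℤ, α - x ≠ m) :
    hahnOp α β N (fun y => ∑ k ∈ range (n + 1), hahnCoeff β N n k * hahnRatio α y k) x =
      α * n * (n + β - N) * ∑ k ∈ range (n + 1), hahnCoeff β N n k * hahnRatio (α + 1) x k := by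
  set c := hahnCoeff β N n
  set g := hahnRatio (α + 1) x
  have hshift : ∀ j ∈ range n, c (j + 1) * (α * (j + 1) * (N - j) * g j) =
      c j * (α * (n - j) * (β + n - N + j)) * g j := fun j hj => by
    have := hahnCoeff_succ_mul β n ((mem_range.1 hj).trans_le hn)
    linear_combination α * g j * this
  calc hahnOp α β N (fun y => ∑ k ∈ range (n + 1), c k * hahnRatio α y k) x
      = ∑ j ∈ range n, c (j + 1) * hahnOp α β N (hahnRatio α · (j + 1)) x := by
        rw [hahnOp_sum, sum_range_succ', hahnOp_hahnRatio_zero, mul_zero, add_zero]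
    _ = ∑ j ∈ range n, (c (j + 1) * (α * (j + 1) * (j + 1 + β - N)) * g (j + 1)
          + c j * (α * (n - j) * (β + n - N + j)) * g j) := by
        refine sum_congr rfl fun j hj => ?_
        rw [hahnOp_hahnRatio_succ α β N x hαx, mul_add, hshift j hj]
        ring
    _ = ∑ k ∈ range (n + 1), c k * (α * k * (k + β - N)) * g k
          + ∑ k ∈ range (n + 1), c k * (α * (n - k) * (β + n - N + k)) * g k := by
        -- the boundary terms carry the factor `k = 0`, resp. `n - k = 0`
        rw [sum_add_distrib, sum_range_succ' _ n, sum_range_succ _ n]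
        push_cast
        simp only [mul_zero, zero_mul, sub_self, add_zero]
    _ = α * n * (n + β - N) * ∑ k ∈ range (n + 1), c k * g k := by
        rw [← sum_add_distrib, mul_sum]
        exact sum_congr rfl fun k _ => by ring

lemma U_eq_sum (α β : ℝ) (N n : ℕ) (x : ℤ) :
    U α β N n x = ((-1 : ℝ) ^ n * poch (-(N : ℝ)) n / poch (β + 1) n) *
      ∑ k ∈ range (n + 1), hahnCoeff β N n k * hahnRatio α x k := by
  unfold U hahnCoeff hahnRatio
  congr 1
  exact sum_congr rfl fun k _ => by ring

theorem statement7_general (N : ℕ) (α β : ℝ)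
    (hα : ∀ m : ℤ, α ≠ (m : ℝ))
    (n : ℕ) (hn : n ≤ N) (x : ℤ) :
    A1 α β N (x : ℝ) * U α β N n (x + 1) + A2 α β N (x : ℝ) * U α β N n (x - 1)
      + A0 α β N (x : ℝ) * U α β N n x =
    α * (n : ℝ) * ((n : ℝ) + β - (N : ℝ)) * U (α + 1) β N n x := by
  have hαx : ∀ m : ℤ, α - x ≠ m := fun m h => hα (m + x) (by push_cast; linarith)
  have key := hahnOp_sum_hahnCoeff_mul_hahnRatio α β hn x hαx
  simp only [hahnOp] at key
  simp only [U_eq_sum]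
  push_cast
  linear_combination ((-1 : ℝ) ^ n * poch (-(N : ℝ)) n / poch (β + 1) n) * key

theorem statement7 (N : ℕ) (hN : 0 < N) (α β : ℝ)
    (hα : ∀ m : ℤ, α ≠ (m : ℝ)) (hβ : ∀ m : ℤ, β ≠ (m : ℝ))
    (n : ℕ) (hn : n ≤ N) (x : ℤ) :
    A1 α β N (x : ℝ) * U α β N n (x + 1) + A2 α β N (x : ℝ) * U α β N n (x - 1)
      + A0 α β N (x : ℝ) * U α β N n x =
    α * (n : ℝ) * ((n : ℝ) + β - (N : ℝ)) * U (α + 1) β N n x :=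
  statement7_general N α β hα n hn x
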